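/- Let G be a connected cubic graph and let T be a triangle of G. Then the number of vertices of T that lie in some triangle of G other than T is 0, 2, or 3 (never exactly 1); and if this number is 3, then G is isomorphic to K4. -/

import Mathlib

/-!
Two triangles through a vertex of degree 3 use two pairs out of its three neighbours, so they
share an edge; hence the vertices of `T` lying in other triangles come in pairs, never alone.
Another triangle at an edge of `T` consists of that edge and the unique neighbour outside `T`
of its ends. If all three vertices of `T` lie in other triangles, these outside neighbours must
therefore all coincide, giving a `K₄`. A `K₄` in a cubic graph is closed under adjacency, so by
connectedness it is the whole graph.
-/

open Finset

namespace SimpleGraph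

variable {V : Type*} {G : SimpleGraph V} {n : ℕ} {s t : Finset V} {v : V}

lemma IsClique.erase_subset_neighborFinset [DecidableEq V] [Fintype (G.neighborSet v)]
    (hs : G.IsClique (s : Set V)) (hv : v ∈ s) : s.erase v ⊆ G.neighborFinset v := fun w hw ↦
  (G.mem_neighborFinset v w).2 <| hs hv (mem_of_mem_erase hw) (ne_of_mem_erase hw).symm

lemma IsNClique.exists_ne_mem_of_degree_lt [Fintype (G.neighborSet v)]
    (hs : G.IsNClique n s) (ht : G.IsNClique n t) (hvs : v ∈ s) (hvt : v ∈ t)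
    (hdeg : G.degree v < 2 * (n - 1)) : ∃ w, w ≠ v ∧ w ∈ s ∧ w ∈ t := by
  classical
  obtain ⟨w, hw⟩ : (s.erase v ∩ t.erase v).Nonempty := by
    rw [← card_pos]
    have hunion := card_le_card <| union_subset (hs.1.erase_subset_neighborFinset hvs)
      (ht.1.erase_subset_neighborFinset hvt)
    have := card_union_add_card_inter (s.erase v) (t.erase v)
    rw [card_erase_of_mem hvs, card_erase_of_mem hvt, hs.2, ht.2, card_neighborFinset_eq_degree]
      at *
    omega
  simp only [mem_inter, mem_erase] at hw
  exact ⟨w, hw.1.1, hw.1.2, hw.2.2⟩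

lemma IsNClique.eq_of_adj_of_notMem [Fintype (G.neighborSet v)] (hs : G.IsNClique n s)
    (hv : v ∈ s) (hdeg : G.degree v ≤ n) {x y : V} (hx : G.Adj v x) (hy : G.Adj v y)
    (hxs : x ∉ s) (hys : y ∉ s) : x = y := by
  classical
  by_contra hxy
  have hsub : insert x (insert y (s.erase v)) ⊆ G.neighborFinset v := by
    simp only [insert_subset_iff, mem_neighborFinset]
    exact ⟨hx, hy, hs.1.erase_subset_neighborFinset hv⟩
  have hcard := card_le_card hsub
  rw [card_insert_of_notMem (by simp [hxy, hxs]), card_insert_of_notMem (by simp [hys]),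
    card_erase_of_mem hv, hs.2, card_neighborFinset_eq_degree] at hcard
  have : 0 < n := hs.2 ▸ card_pos.2 ⟨v, hv⟩
  omega

lemma IsNClique.exists_adj_adj_notMem_of_ne [Fintype (G.neighborSet v)]
    (hs : G.IsNClique n s) (ht : G.IsNClique n t) (hne : t ≠ s) (hvs : v ∈ s) (hvt : v ∈ t)
    (hdeg : G.degree v < 2 * (n - 1)) :
    ∃ w ∈ s, w ≠ v ∧ ∃ z ∉ s, G.Adj v z ∧ G.Adj w z := by
  obtain ⟨w, hwv, hws, hwt⟩ := hs.exists_ne_mem_of_degree_lt ht hvs hvt hdeg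
  obtain ⟨z, hzt, hzs⟩ := not_subset.1 fun hts ↦
    hne <| eq_of_subset_of_card_le hts (by rw [hs.2, ht.2])
  exact ⟨w, hws, hwv, z, hzs, ht.1 hvt hzt (by rintro rfl; exact hzs hvs),
    ht.1 hwt hzt (by rintro rfl; exact hzs hws)⟩

lemma IsNClique.exists_notMem_forall_adj [Fintype V] [DecidableRel G.Adj]
    (hs : G.IsNClique 3 s) (hdeg : ∀ v, G.degree v ≤ 3)
    (hother : ∀ v ∈ s, ∃ t, G.IsNClique 3 t ∧ t ≠ s ∧ v ∈ t) :
    ∃ d ∉ s, ∀ v ∈ s, G.Adj v d := by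
  classical
  have hdeg' (v) : G.degree v < 2 * (3 - 1) := (hdeg v).trans_lt (by norm_num)
  obtain ⟨a, has⟩ : s.Nonempty := card_pos.1 (by rw [hs.2]; norm_num)
  obtain ⟨t, ht, hts, hat⟩ := hother a has
  obtain ⟨w, hws, hwa, d, hds, had, hwd⟩ := hs.exists_adj_adj_notMem_of_ne ht hts has hat (hdeg' a)
  refine ⟨d, hds, fun v hvs ↦ ?_⟩
  by_cases hva : v = a
  · exact hva ▸ had
  by_cases hvw : v = w
  · exact hvw ▸ hwd
  obtain ⟨t', ht', hts', hvt'⟩ := hother v hvs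
  obtain ⟨w', hw's, hw'v, d', hd's, hvd', hw'd'⟩ :=
    hs.exists_adj_adj_notMem_of_ne ht' hts' hvs hvt' (hdeg' v)
  have hs_eq : {a, w, v} = s := eq_of_subset_of_card_le (by simp [insert_subset_iff, *])
    (by rw [hs.2, card_eq_three.2 ⟨a, w, v, Ne.symm hwa, Ne.symm hva, Ne.symm hvw, rfl⟩])
  have hw'd : G.Adj w' d := by
    rw [← hs_eq] at hw's
    simp only [mem_insert, mem_singleton] at hw's
    rcases hw's with rfl | rfl | rfl
    exacts [had, hwd, absurd rfl hw'v]
  rwa [hs.eq_of_adj_of_notMem hw's (hdeg w') hw'd hw'd' hds hd's]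

lemma IsNClique.neighborFinset_eq_erase [DecidableEq V] [Fintype (G.neighborSet v)]
    (hs : G.IsNClique (n + 1) s) (hv : v ∈ s) (hdeg : G.degree v ≤ n) :
    G.neighborFinset v = s.erase v :=
  (eq_of_subset_of_card_le (hs.1.erase_subset_neighborFinset hv) <| by
    rwa [card_erase_of_mem hv, hs.2, card_neighborFinset_eq_degree, Nat.add_sub_cancel]).symm

lemma Connected.nonempty_iso_top_of_not_cliqueFree [Fintype V] [DecidableRel G.Adj] {k : ℕ}
    (hconn : G.Connected) (hdeg : ∀ v, G.degree v ≤ k) (hclique : ¬ G.CliqueFree (k + 1)) :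
    Nonempty (G ≃g (⊤ : SimpleGraph (Fin (k + 1)))) := by
  classical
  obtain ⟨s, hs⟩ := not_forall_not.1 hclique
  obtain ⟨u, hu⟩ : s.Nonempty := card_pos.1 (by rw [hs.2]; omega)
  have hmem (v : V) : v ∈ s := by
    refine (hconn.preconnected u v).mem_subgraphVerts (H := (⊤ : G.Subgraph).induce s) ?_ hu
    intro x hx y hxy
    have hy : y ∈ s.erase x :=
      hs.neighborFinset_eq_erase hx (hdeg x) ▸ (G.mem_neighborFinset x y).2 hxy
    exact ⟨hx, mem_of_mem_erase hy, hxy⟩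
  have huniv : s = univ := eq_univ_of_forall hmem
  obtain rfl : G = ⊤ := isClique_univ.1 (by simpa [huniv] using hs.1)
  exact ⟨Iso.completeGraph (Fintype.equivFinOfCardEq (by rw [← card_univ, ← huniv, hs.2]))⟩

end SimpleGraph

open SimpleGraph

/-- For a triangle `T` of a connected cubic graph `G`, the number of vertices of `T`
lying in some triangle other than `T` is 0, 2 or 3; and if it is 3, then `G ≅ K₄`. -/
theorem stmt_4 {V : Type*} [Fintype V] [DecidableEq V] (G : SimpleGraph V)
    [DecidableRel G.Adj] (hconn : G.Connected) (hcubic : ∀ v, G.degree v = 3)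
    (T : Finset V) (hT : G.IsNClique 3 T) :
    ({v | v ∈ T ∧ ∃ T' : Finset V, G.IsNClique 3 T' ∧ T' ≠ T ∧ v ∈ T'}.ncard = 0 ∨
      {v | v ∈ T ∧ ∃ T' : Finset V, G.IsNClique 3 T' ∧ T' ≠ T ∧ v ∈ T'}.ncard = 2 ∨
      {v | v ∈ T ∧ ∃ T' : Finset V, G.IsNClique 3 T' ∧ T' ≠ T ∧ v ∈ T'}.ncard = 3) ∧
    ({v | v ∈ T ∧ ∃ T' : Finset V, G.IsNClique 3 T' ∧ T' ≠ T ∧ v ∈ T'}.ncard = 3 →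
      Nonempty (G ≃g (⊤ : SimpleGraph (Fin 4)))) := by
  set S := {v | v ∈ T ∧ ∃ T' : Finset V, G.IsNClique 3 T' ∧ T' ≠ T ∧ v ∈ T'}
  have hST : S ⊆ T := fun v hv ↦ hv.1
  have hle : S.ncard ≤ 3 := by
    simpa [hT.2] using Set.ncard_le_ncard hST T.finite_toSet
  have hne_one : S.ncard ≠ 1 := by
    intro hone
    obtain ⟨v, hv⟩ := Set.ncard_eq_one.1 hone
    obtain ⟨hvT, T', hT', hT'T, hvT'⟩ : v ∈ S := hv ▸ rfl
    obtain ⟨w, hwv, hwT, hwT'⟩ := hT.exists_ne_mem_of_degree_lt hT' hvT hvT' (by simp [hcubic])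
    have hwS : w ∈ S := ⟨hwT, T', hT', hT'T, hwT'⟩
    rw [hv] at hwS
    exact hwv hwS
  refine ⟨by omega, fun hthree ↦ ?_⟩
  have hS : S = T := Set.eq_of_subset_of_ncard_le hST (by simp [hthree, hT.2]) T.finite_toSet
  obtain ⟨d, hdT, hd⟩ := hT.exists_notMem_forall_adj (fun v ↦ (hcubic v).le)
    fun v hv ↦ (hS.symm ▸ hv : v ∈ S).2
  exact hconn.nonempty_iso_top_of_not_cliqueFree (fun v ↦ (hcubic v).le)
    fun h ↦ h _ (hT.insert fun v hv ↦ (hd v hv).symm)
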